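/- Let A ⊂ ℝ^{n+1}_+ and a > 0, and let E_a := {𝐱 ∈ ℝ^{n+1}_+ : ρ(𝐱, A) < a} be the hyperbolic a-neighborhood of A. Then there exist constants δ, δ' ∈ (0, 1/10), depending only on a, such that for every 𝐳 ∈ E_a, |B_ρ(𝐳, δ) ∩ E_a| ≥ δ' |B_ρ(𝐳, δ)|, where |·| denotes (n+1)-dimensional Lebesgue measure. -/

import Mathlib

open MeasureTheory

noncomputable section
/-- `arccosh t = log (t + √(t² - 1))` (for `t ≥ 1`). -/
def arccosh (t : ℝ) : ℝ := Real.log (t + Real.sqrt (t ^ 2 - 1))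

/-- The Poincaré hyperbolic metric on the upper half-space `ℝ^n × (0,∞)`:
`ρ(p,q) = arccosh(1 + |p-q|²/(2 p_{n+1} q_{n+1}))`, with `|p-q|` the Euclidean distance. -/
def hypDist {n : ℕ} (p q : EuclideanSpace ℝ (Fin n) × ℝ) : ℝ :=
  arccosh (1 + (‖p.1 - q.1‖ ^ 2 + (p.2 - q.2) ^ 2) / (2 * p.2 * q.2))
end

/-!
A hyperbolic ball `B_ρ(z, s)` is the Euclidean ball with centre `(z', z_{n+1} cosh s)` and radius
`z_{n+1} sinh s`. If `ρ(z, w) < a` with `w ∈ A`, then `z` lies in the Euclidean ball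
`B_ρ(w, a) ⊆ E_a`, whose radius `w_{n+1} sinh a` exceeds `z_{n+1} e^{-a} sinh a`, while the
Euclidean ball of radius `z_{n+1} (1 - e^{-δ})` about `z` lies in `B_ρ(z, δ)`. Moving from `z`
towards the centre of `B_ρ(w, a)` therefore gives a Euclidean ball of radius comparable to
`z_{n+1}` inside `B_ρ(z, δ) ∩ E_a`; since `B_ρ(z, δ)` itself has radius `z_{n+1} sinh δ`, the ratio
of the volumes is bounded below independently of `z` by scaling.
-/

open Metric Real WithLp

section NormedSpace

variable {E : Type*} [NormedAddCommGroup E] [NormedSpace ℝ E]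

theorem exists_ball_subset_ball_inter_ball {c z : E} {R e : ℝ} (hz : z ∈ ball c R)
    (he : 0 < e) : ∃ p, ball p (min R (e / 2)) ⊆ ball c R ∩ ball z e := by
  have hR : 0 < R := pos_of_mem_ball hz
  set θ := min 1 (e / (2 * R))
  have hθ0 : 0 ≤ θ := le_min zero_le_one (by positivity)
  have hθ1 : θ ≤ 1 := min_le_left _ _
  have hθe : 2 * θ * R ≤ e := by
    have : θ ≤ e / (2 * R) := min_le_right _ _
    rw [le_div_iff₀ (by positivity)] at this
    linarith
  have hradius : min R (e / 2) = θ * R := by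
    rw [min_mul_of_nonneg _ _ hR.le, one_mul, div_mul_eq_mul_div, mul_div_mul_right _ _ hR.ne']
  rw [mem_ball, dist_eq_norm] at hz
  have hcz : ‖c - z‖ < R := by rwa [norm_sub_rev]
  set p := z + θ • (c - z)
  refine ⟨p, fun q hq => ?_⟩
  rw [hradius, mem_ball, dist_eq_norm] at hq
  constructor
  · rw [mem_ball, dist_eq_norm]
    calc ‖q - c‖ = ‖(q - p) + (1 - θ) • (z - c)‖ := by congr 1; module
      _ ≤ ‖q - p‖ + (1 - θ) * ‖z - c‖ := by
        grw [norm_add_le, norm_smul, Real.norm_of_nonneg (sub_nonneg.2 hθ1)]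
      _ < θ * R + (1 - θ) * R :=
        add_lt_add_of_lt_of_le hq (mul_le_mul_of_nonneg_left hz.le (sub_nonneg.2 hθ1))
      _ = R := by ring
  · rw [mem_ball, dist_eq_norm]
    calc ‖q - z‖ = ‖(q - p) + θ • (c - z)‖ := by congr 1; module
      _ ≤ ‖q - p‖ + θ * ‖c - z‖ := by grw [norm_add_le, norm_smul, Real.norm_of_nonneg hθ0]
      _ < θ * R + θ * R := add_lt_add_of_lt_of_le hq (mul_le_mul_of_nonneg_left hcz.le hθ0)
      _ ≤ e := by linarith

theorem addHaar_ball_eq_ofReal_div_pow_mul [Nontrivial E] [MeasurableSpace E] [BorelSpace E]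
    [FiniteDimensional ℝ E] (μ : Measure E) [μ.IsAddHaarMeasure] (p c : E) {s r : ℝ}
    (hs : 0 ≤ s) (hr : 0 < r) :
    μ (ball p s) = ENNReal.ofReal ((s / r) ^ Module.finrank ℝ E) * μ (ball c r) := by
  rw [Measure.addHaar_ball μ p hs, Measure.addHaar_ball μ c hr.le, ← mul_assoc,
    ← ENNReal.ofReal_mul (by positivity), div_pow, div_mul_cancel₀ _ (by positivity)]

end NormedSpace

section Prod

variable {U V : Type*} [NormedAddCommGroup U] [InnerProductSpace ℝ U] [MeasurableSpace U]
  [BorelSpace U] [FiniteDimensional ℝ U] [NormedAddCommGroup V] [InnerProductSpace ℝ V]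
  [MeasurableSpace V] [BorelSpace V] [FiniteDimensional ℝ V]

theorem WithLp.volume_preimage_toLp_ball (p : WithLp 2 (U × V)) (r : ℝ) :
    volume (toLp 2 ⁻¹' ball p r) = volume (ball p r) :=
  (volume_preserving_toLp U V).measure_preimage measurableSet_ball.nullMeasurableSet

end Prod

theorem WithLp.dist_toLp_prod_sq {α : Type*} [NormedAddCommGroup α] (v w : α × ℝ) :
    dist (toLp 2 v) (toLp 2 w) ^ 2 = ‖v.1 - w.1‖ ^ 2 + (v.2 - w.2) ^ 2 := by
  rw [dist_eq_norm, ← toLp_sub, prod_norm_sq_eq_of_L2]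
  simp

namespace UpperHalfSpace

variable {n : ℕ}

def hypBall (z : EuclideanSpace ℝ (Fin n) × ℝ) (s : ℝ) : Set (EuclideanSpace ℝ (Fin n) × ℝ) :=
  {w | 0 < w.2 ∧ hypDist z w < s}

def hypNbhd (A : Set (EuclideanSpace ℝ (Fin n) × ℝ)) (a : ℝ) :
    Set (EuclideanSpace ℝ (Fin n) × ℝ) :=
  {p | 0 < p.2 ∧ ∃ w ∈ A, hypDist p w < a}

theorem hypDist_comm (p q : EuclideanSpace ℝ (Fin n) × ℝ) : hypDist p q = hypDist q p := by
  rw [hypDist, hypDist, norm_sub_rev, sub_sq' p.2, sub_sq' q.2, mul_right_comm 2 p.2]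
  ring_nf

theorem hypDist_lt_iff {z w : EuclideanSpace ℝ (Fin n) × ℝ} {s : ℝ} (hz : 0 < z.2) (hw : 0 < w.2)
    (hs : 0 < s) :
    hypDist z w < s ↔ ‖z.1 - w.1‖ ^ 2 + (z.2 - w.2) ^ 2 < 2 * z.2 * w.2 * (cosh s - 1) := by
  have hden : 0 < 2 * z.2 * w.2 := by positivity
  conv_lhs => rw [hypDist, arccosh, ← arcosh, ← arcosh_cosh hs.le]
  rw [arcosh_lt_arcosh (by positivity) (cosh_pos s),
    ← lt_sub_iff_add_lt', div_lt_iff₀ hden, mul_comm]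

theorem mul_exp_neg_lt_of_mem_ball {w : EuclideanSpace ℝ (Fin n) × ℝ} {x : EuclideanSpace ℝ (Fin n)}
    {t s : ℝ} (h : toLp 2 w ∈ ball (toLp 2 (x, t * cosh s)) (t * sinh s)) :
    t * exp (-s) < w.2 := by
  have hsq : (w.2 - t * cosh s) ^ 2 ≤ dist (toLp 2 w) (toLp 2 (x, t * cosh s)) ^ 2 := by
    rw [dist_toLp_prod_sq]
    exact le_add_of_nonneg_left (sq_nonneg _)
  have hlow := (abs_le_of_sq_le_sq' hsq dist_nonneg).1
  rw [mem_ball] at h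
  rw [← cosh_sub_sinh]
  linarith

-- `E × ℝ` carries the sup norm; its Euclidean balls are taken in `WithLp 2 (E × ℝ)`.
theorem hypBall_eq_preimage_ball {z : EuclideanSpace ℝ (Fin n) × ℝ} {s : ℝ} (hz : 0 < z.2)
    (hs : 0 < s) :
    hypBall z s = toLp 2 ⁻¹' ball (toLp 2 (z.1, z.2 * cosh s)) (z.2 * sinh s) := by
  ext w
  have hdist : dist (toLp 2 w) (toLp 2 (z.1, z.2 * cosh s)) ^ 2 - (z.2 * sinh s) ^ 2 =
      ‖z.1 - w.1‖ ^ 2 + (z.2 - w.2) ^ 2 - 2 * z.2 * w.2 * (cosh s - 1) := by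
    rw [dist_toLp_prod_sq, norm_sub_rev]
    linear_combination z.2 ^ 2 * cosh_sq s
  have hball : toLp 2 w ∈ ball (toLp 2 (z.1, z.2 * cosh s)) (z.2 * sinh s) ↔
      dist (toLp 2 w) (toLp 2 (z.1, z.2 * cosh s)) ^ 2 < (z.2 * sinh s) ^ 2 := by
    rw [mem_ball, pow_lt_pow_iff_left₀ dist_nonneg (by positivity) two_ne_zero]
  simp only [hypBall, Set.mem_ofPred_eq, Set.mem_preimage]
  constructor
  · rintro ⟨hw, hzw⟩
    rw [hypDist_lt_iff hz hw hs] at hzw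
    rw [hball]
    linarith
  · intro h
    have hw : 0 < w.2 := (mul_pos hz (exp_pos _)).trans (mul_exp_neg_lt_of_mem_ball h)
    rw [hball] at h
    refine ⟨hw, (hypDist_lt_iff hz hw hs).2 ?_⟩
    linarith

noncomputable def innerRadiusConst (a δ : ℝ) : ℝ :=
  min (exp (-a) * sinh a) ((1 - exp (-δ)) / 2)

noncomputable def densityConst (n : ℕ) (a δ : ℝ) : ℝ :=
  (innerRadiusConst a δ / sinh δ) ^ (n + 1)

theorem one_sub_exp_neg_pos {δ : ℝ} (hδ : 0 < δ) : 0 < 1 - exp (-δ) := by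
  rwa [sub_pos, exp_lt_one_iff, neg_lt_zero]

theorem innerRadiusConst_pos {a δ : ℝ} (ha : 0 < a) (hδ : 0 < δ) : 0 < innerRadiusConst a δ :=
  lt_min (mul_pos (exp_pos _) (sinh_pos_iff.2 ha)) (half_pos (one_sub_exp_neg_pos hδ))

theorem densityConst_pos {a δ : ℝ} (ha : 0 < a) (hδ : 0 < δ) : 0 < densityConst n a δ :=
  pow_pos (div_pos (innerRadiusConst_pos ha hδ) (sinh_pos_iff.2 hδ)) _

theorem preimage_ball_subset_hypBall {z : EuclideanSpace ℝ (Fin n) × ℝ} {δ : ℝ} (hz : 0 < z.2)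
    (hδ : 0 < δ) : toLp 2 ⁻¹' ball (toLp 2 z) (z.2 * (1 - exp (-δ))) ⊆ hypBall z δ := by
  have hzc : dist (toLp 2 z) (toLp 2 (z.1, z.2 * cosh δ)) = z.2 * (cosh δ - 1) := by
    rw [← sq_eq_sq₀ dist_nonneg (mul_nonneg hz.le (sub_nonneg.2 (one_le_cosh δ))),
      dist_toLp_prod_sq, sub_self, norm_zero]
    ring
  rw [hypBall_eq_preimage_ball hz hδ]
  refine Set.preimage_mono (ball_subset_ball' (le_of_eq ?_))
  rw [hzc]
  linear_combination z.2 * cosh_sub_sinh δ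

theorem exists_preimage_ball_subset_hypBall_inter_hypNbhd {a δ : ℝ} (ha : 0 < a) (hδ : 0 < δ)
    {A : Set (EuclideanSpace ℝ (Fin n) × ℝ)} (hA : A ⊆ {p | 0 < p.2})
    {z : EuclideanSpace ℝ (Fin n) × ℝ} (hz : z ∈ hypNbhd A a) :
    ∃ p, toLp 2 ⁻¹' ball p (z.2 * innerRadiusConst a δ) ⊆ hypBall z δ ∩ hypNbhd A a := by
  obtain ⟨hz2, w, hwA, hzw⟩ := hz
  have hw2 : 0 < w.2 := hA hwA
  have hzw' : toLp 2 z ∈ ball (toLp 2 (w.1, w.2 * cosh a)) (w.2 * sinh a) := by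
    rw [← Set.mem_preimage, ← hypBall_eq_preimage_ball hw2 ha]
    exact ⟨hz2, hypDist_comm z w ▸ hzw⟩
  have hnbhd : toLp 2 ⁻¹' ball (toLp 2 (w.1, w.2 * cosh a)) (w.2 * sinh a) ⊆ hypNbhd A a := by
    rw [← hypBall_eq_preimage_ball hw2 ha]
    rintro p ⟨hp, hpw⟩
    exact ⟨hp, w, hwA, hypDist_comm w p ▸ hpw⟩
  have hheight : z.2 * exp (-a) < w.2 := by
    have hw : w ∈ hypBall z a := ⟨hw2, hzw⟩
    rw [hypBall_eq_preimage_ball hz2 ha] at hw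
    exact mul_exp_neg_lt_of_mem_ball hw
  have hradius : z.2 * innerRadiusConst a δ ≤ min (w.2 * sinh a) (z.2 * (1 - exp (-δ)) / 2) := by
    rw [innerRadiusConst, mul_min_of_nonneg _ _ hz2.le, ← mul_assoc, mul_div_assoc']
    exact min_le_min (mul_le_mul_of_nonneg_right hheight.le (sinh_pos_iff.2 ha).le) le_rfl
  obtain ⟨p, hp⟩ := exists_ball_subset_ball_inter_ball hzw' (mul_pos hz2 (one_sub_exp_neg_pos hδ))
  refine ⟨p, fun q hq => ?_⟩
  have hq := hp (ball_subset_ball hradius hq)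
  exact ⟨preimage_ball_subset_hypBall hz2 hδ hq.2, hnbhd hq.1⟩

theorem ofReal_densityConst_mul_volume_hypBall_le {a δ : ℝ} (ha : 0 < a) (hδ : 0 < δ)
    {A : Set (EuclideanSpace ℝ (Fin n) × ℝ)} (hA : A ⊆ {p | 0 < p.2})
    {z : EuclideanSpace ℝ (Fin n) × ℝ} (hz : z ∈ hypNbhd A a) :
    ENNReal.ofReal (densityConst n a δ) * volume (hypBall z δ) ≤
      volume (hypBall z δ ∩ hypNbhd A a) := by
  obtain ⟨p, hp⟩ := exists_preimage_ball_subset_hypBall_inter_hypNbhd ha hδ hA hz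
  refine le_trans (le_of_eq ?_) (measure_mono hp)
  have hz2 : 0 < z.2 := hz.1
  rw [hypBall_eq_preimage_ball hz2 hδ, volume_preimage_toLp_ball, volume_preimage_toLp_ball,
    addHaar_ball_eq_ofReal_div_pow_mul volume p (toLp 2 (z.1, z.2 * cosh δ))
      (mul_pos hz2 (innerRadiusConst_pos ha hδ)).le (mul_pos hz2 (sinh_pos_iff.2 hδ)),
    mul_div_mul_left _ _ hz2.ne', (WithLp.linearEquiv 2 ℝ _).finrank_eq]
  simp [densityConst]

end UpperHalfSpace

open UpperHalfSpace in
theorem stmt19_general (n : ℕ) (a : ℝ) (ha : 0 < a) :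
    ∃ δ δ' : ℝ, 0 < δ ∧ δ < 1 / 10 ∧ 0 < δ' ∧ δ' < 1 / 10 ∧
      ∀ A : Set (EuclideanSpace ℝ (Fin n) × ℝ),
        A ⊆ {p : EuclideanSpace ℝ (Fin n) × ℝ | 0 < p.2} →
        ∀ z ∈ {p : EuclideanSpace ℝ (Fin n) × ℝ | 0 < p.2 ∧ ∃ w ∈ A, hypDist p w < a},
          ENNReal.ofReal δ' *
              volume {w : EuclideanSpace ℝ (Fin n) × ℝ | 0 < w.2 ∧ hypDist z w < δ} ≤
            volume ({w : EuclideanSpace ℝ (Fin n) × ℝ | 0 < w.2 ∧ hypDist z w < δ} ∩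
              {p : EuclideanSpace ℝ (Fin n) × ℝ | 0 < p.2 ∧ ∃ w ∈ A, hypDist p w < a}) := by
  have hδ : (0 : ℝ) < 1 / 20 := by norm_num
  refine ⟨1 / 20, min (1 / 20) (densityConst n a (1 / 20)), hδ, by norm_num,
    lt_min hδ (densityConst_pos ha hδ), (min_le_left _ _).trans_lt (by norm_num),
    fun A hA z hz => ?_⟩
  calc _ ≤ ENNReal.ofReal (densityConst n a (1 / 20)) * volume (hypBall z (1 / 20)) :=
        mul_le_mul_left (ENNReal.ofReal_le_ofReal (min_le_right _ _)) _
    _ ≤ _ := ofReal_densityConst_mul_volume_hypBall_le ha hδ hA hz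

/-- hyperbolic neighborhoods `E_a = {x : ρ(x,A) < a}` of subsets of the upper
half-space have the interior density property ("Property I") with constants
`δ, δ' ∈ (0,1/10)` depending only on `a`:
`|B_ρ(z,δ) ∩ E_a| ≥ δ' |B_ρ(z,δ)|` for every `z ∈ E_a`. -/
theorem stmt19 (n : ℕ) (hn : 1 ≤ n) (a : ℝ) (ha : 0 < a) :
    ∃ δ δ' : ℝ, 0 < δ ∧ δ < 1 / 10 ∧ 0 < δ' ∧ δ' < 1 / 10 ∧
      ∀ A : Set (EuclideanSpace ℝ (Fin n) × ℝ),
        A ⊆ {p : EuclideanSpace ℝ (Fin n) × ℝ | 0 < p.2} →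
        ∀ z ∈ {p : EuclideanSpace ℝ (Fin n) × ℝ | 0 < p.2 ∧ ∃ w ∈ A, hypDist p w < a},
          ENNReal.ofReal δ' *
              volume {w : EuclideanSpace ℝ (Fin n) × ℝ | 0 < w.2 ∧ hypDist z w < δ} ≤
            volume ({w : EuclideanSpace ℝ (Fin n) × ℝ | 0 < w.2 ∧ hypDist z w < δ} ∩
              {p : EuclideanSpace ℝ (Fin n) × ℝ | 0 < p.2 ∧ ∃ w ∈ A, hypDist p w < a}) :=
  stmt19_general n a ha
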